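/- arXiv:1712.09451 — 3 statements merged into one kernel-verified Lean document; each statement's English description precedes it below -/
import Mathlib

section
/- For every irrational number α, the inequality |α - p/q| < 1/(√5 · q²) has infinitely many rational solutions p/q with q ≥ 1. -/
/-!
Every irrational `α` lies between Farey neighbours `a/b < α < c/d` (`bc - ad = 1`) with `bd`
arbitrarily large, obtained by Stern–Brocot bisection. Among `a/b`, `c/d` and the mediant
`(a+c)/(b+d)` at least one satisfies Hurwitz's bound: if two neighbours `x/y < z/w` around `α`
both fail it, then `1/(√5 y²) + 1/(√5 w²) ≤ 1/(yw)`, i.e. `w/y` lies in `[φ⁻¹, φ]`. If all three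
fail, this applies to two neighbouring pairs sharing a denominator `m`, whose other denominators
`n` and `m + n` differ by `m`; since `φ - φ⁻¹ = 1` this forces `n/m = φ⁻¹`, which is irrational.
All these approximations lie within `1/(bd)` of `α`, so there are infinitely many of them.
-/

open Real

def hurwitzApproximants (α : ℝ) : Set (ℤ × ℤ) :=
  {pq | 1 ≤ pq.2 ∧ |α - (pq.1 : ℝ) / (pq.2 : ℝ)| < 1 / (√5 * (pq.2 : ℝ) ^ 2)}

lemma Set.infinite_of_pos_of_forall_exists_lt {ι : Type*} {s : Set ι} (f : ι → ℝ)
    (hpos : ∀ i ∈ s, 0 < f i) (h : ∀ ε > 0, ∃ i ∈ s, f i < ε) : s.Infinite := by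
  intro hfin
  obtain ⟨i₀, hi₀, -⟩ := h 1 one_pos
  obtain ⟨i, hi, hmin⟩ := s.exists_min_image f hfin ⟨i₀, hi₀⟩
  obtain ⟨j, hj, hlt⟩ := h (f i) (hpos i hi)
  exact (hmin j hj).not_gt hlt

lemma farey_sub_eq_one_div {a b c d : ℤ} (hb : b ≠ 0) (hd : d ≠ 0) (h : b * c - a * d = 1) :
    (c : ℝ) / d - a / b = 1 / (b * d) := by
  have hR : (b : ℝ) * c - a * d = 1 := by exact_mod_cast h
  field_simp
  linear_combination hR

lemma sq_add_sq_le_sqrt_five_mul_of_not_mem {α : ℝ} {a b c d : ℤ} (hb : 0 < b)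
    (hd : 0 < d) (h : b * c - a * d = 1) (hab : (a : ℝ) / b ≤ α) (hcd : α ≤ (c : ℝ) / d)
    (ha : (a, b) ∉ hurwitzApproximants α) (hc : (c, d) ∉ hurwitzApproximants α) :
    (b : ℝ) ^ 2 + d ^ 2 ≤ √5 * b * d := by
  simp only [hurwitzApproximants, Set.mem_ofPred_eq, not_and, not_lt] at ha hc
  have ha' := ha hb
  have hc' := hc hd
  rw [abs_of_nonneg (sub_nonneg.2 hab)] at ha'
  rw [abs_of_nonpos (sub_nonpos.2 hcd)] at hc'
  have hsum : 1 / (√5 * (b : ℝ) ^ 2) + 1 / (√5 * (d : ℝ) ^ 2) ≤ 1 / (b * d) := by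
    rw [← farey_sub_eq_one_div hb.ne' hd.ne' h]
    linarith
  have hb' : (0 : ℝ) < b := by exact_mod_cast hb
  have hd' : (0 : ℝ) < d := by exact_mod_cast hd
  have h5 : (0 : ℝ) < √5 := by positivity
  rw [div_add_div _ _ (by positivity) (by positivity),
    div_le_div_iff₀ (by positivity) (by positivity)] at hsum
  nlinarith [mul_pos (mul_pos h5 hb') hd']

lemma abs_two_mul_sub_sqrt_five_mul_le {x y : ℝ} (hx : 0 ≤ x) (h : x ^ 2 + y ^ 2 ≤ √5 * x * y) :
    |2 * y - √5 * x| ≤ x := by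
  have h5 : √5 ^ 2 = 5 := sq_sqrt (by norm_num)
  exact abs_le_of_sq_le_sq (by nlinarith) hx

lemma not_sq_add_add_sq_le_sqrt_five_mul {m n : ℤ} (hm : 0 < m)
    (h : (m : ℝ) ^ 2 + n ^ 2 ≤ √5 * m * n) :
    ¬ (m : ℝ) ^ 2 + (m + n) ^ 2 ≤ √5 * m * (m + n) := by
  intro h'
  have hm' : (0 : ℝ) < m := by exact_mod_cast hm
  obtain ⟨h₁, -⟩ := abs_le.1 (abs_two_mul_sub_sqrt_five_mul_le hm'.le h)
  obtain ⟨-, h₂⟩ := abs_le.1 (abs_two_mul_sub_sqrt_five_mul_le hm'.le h')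
  have hirr : Irrational √5 := by simpa using Nat.prime_five.irrational_sqrt
  refine hirr ⟨(2 * n + m) / m, ?_⟩
  push_cast
  rw [div_eq_iff hm'.ne']
  linarith

lemma exists_mem_hurwitzApproximants_between_farey {α : ℝ} (hα : Irrational α) {a b c d : ℤ}
    (hb : 0 < b) (hd : 0 < d) (h : b * c - a * d = 1) (hab : (a : ℝ) / b < α)
    (hcd : α < (c : ℝ) / d) :
    ∃ pq ∈ hurwitzApproximants α, (a : ℝ) / b ≤ pq.1 / pq.2 ∧ (pq.1 : ℝ) / pq.2 ≤ c / d := by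
  have hbd : 0 < b + d := by omega
  have hleft : b * (a + c) - a * (b + d) = 1 := by linear_combination h
  have hright : (b + d) * c - (a + c) * d = 1 := by linear_combination h
  have hm_left := farey_sub_eq_one_div hb.ne' hbd.ne' hleft
  have hm_right := farey_sub_eq_one_div hbd.ne' hd.ne' hright
  push_cast at hm_left hm_right
  have hb' : (0 : ℝ) < b := by exact_mod_cast hb
  have hd' : (0 : ℝ) < d := by exact_mod_cast hd
  have hpos_left : (0 : ℝ) < 1 / (b * (b + d)) := by positivity
  have hpos_right : (0 : ℝ) < 1 / ((b + d) * d) := by positivity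
  by_contra hnone
  have hnot : ∀ p q : ℤ, (a : ℝ) / b ≤ p / q → (p : ℝ) / q ≤ c / d →
      (p, q) ∉ hurwitzApproximants α :=
    fun p q h₁ h₂ hmem => hnone ⟨(p, q), hmem, h₁, h₂⟩
  have ha := hnot a b le_rfl (by linarith)
  have hc := hnot c d (by linarith) le_rfl
  have hm := hnot (a + c) (b + d) (by push_cast; linarith) (by push_cast; linarith)
  have hbd_sq := sq_add_sq_le_sqrt_five_mul_of_not_mem hb hd h hab.le hcd.le ha hc
  have hne : α ≠ ((a + c : ℤ) : ℝ) / ((b + d : ℤ) : ℝ) :=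
    (irrational_iff_ne_rational α).1 hα _ _ hbd.ne'
  rcases hne.lt_or_gt with hlt | hgt
  · have := sq_add_sq_le_sqrt_five_mul_of_not_mem hb hbd hleft hab.le hlt.le ha hm
    push_cast at this
    exact not_sq_add_add_sq_le_sqrt_five_mul hb hbd_sq this
  · have := sq_add_sq_le_sqrt_five_mul_of_not_mem hbd hd hright hgt.le hcd.le hm hc
    push_cast at this
    exact not_sq_add_add_sq_le_sqrt_five_mul hd (n := b) (by linear_combination hbd_sq)
      (by linear_combination this)

lemma exists_farey_pair_around {α : ℝ} (hα : Irrational α) (n : ℕ) :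
    ∃ a b c d : ℤ, 0 < b ∧ 0 < d ∧ b * c - a * d = 1 ∧ (a : ℝ) / b < α ∧ α < (c : ℝ) / d ∧
      (n : ℤ) ≤ b * d := by
  induction n with
  | zero =>
    refine ⟨⌊α⌋, 1, ⌊α⌋ + 1, 1, one_pos, one_pos, by ring, ?_, ?_, by norm_num⟩
    · simpa using (Int.floor_le α).lt_of_ne (hα.ne_int ⌊α⌋).symm
    · simp [Int.lt_floor_add_one α]
  | succ n ih =>
    obtain ⟨a, b, c, d, hb, hd, h, hab, hcd, hn⟩ := ih
    have hne : α ≠ ((a + c : ℤ) : ℝ) / ((b + d : ℤ) : ℝ) :=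
      (irrational_iff_ne_rational α).1 hα _ _ (by omega)
    rcases hne.lt_or_gt with hlt | hgt
    · exact ⟨a, b, a + c, b + d, hb, by omega, by linear_combination h, hab, hlt,
        by push_cast; nlinarith⟩
    · exact ⟨a + c, b + d, c, d, by omega, hd, by linear_combination h, hgt, hcd,
        by push_cast; nlinarith⟩

theorem stmt_5 (α : ℝ) (hα : Irrational α) :
    {pq : ℤ × ℤ | 1 ≤ pq.2 ∧
      |α - (pq.1 : ℝ) / (pq.2 : ℝ)| < 1 / (Real.sqrt 5 * (pq.2 : ℝ) ^ 2)}.Infinite := by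
  show (hurwitzApproximants α).Infinite
  refine Set.infinite_of_pos_of_forall_exists_lt (fun pq : ℤ × ℤ => |α - pq.1 / pq.2|) ?_ ?_
  · rintro ⟨p, q⟩ ⟨hq, -⟩
    exact abs_pos.2 (sub_ne_zero.2 ((irrational_iff_ne_rational α).1 hα p q (by omega)))
  · intro ε hε
    obtain ⟨n, hn⟩ := exists_nat_gt (1 / ε)
    obtain ⟨a, b, c, d, hb, hd, h, hab, hcd, hbd⟩ := exists_farey_pair_around hα n
    obtain ⟨pq, hmem, hl, hr⟩ := exists_mem_hurwitzApproximants_between_farey hα hb hd h hab hcd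
    refine ⟨pq, hmem, ?_⟩
    have hgap := farey_sub_eq_one_div hb.ne' hd.ne' h
    have hn' : (0 : ℝ) < n := lt_of_le_of_lt (by positivity) hn
    have hbd' : (n : ℝ) ≤ b * d := by exact_mod_cast hbd
    calc |α - pq.1 / pq.2| ≤ (c : ℝ) / d - a / b := abs_le.2 ⟨by linarith, by linarith⟩
      _ = 1 / (b * d) := hgap
      _ ≤ 1 / n := one_div_le_one_div_of_le hn' hbd'
      _ < ε := (one_div_lt hε hn').1 hn
end

section
/- For the golden ratio φ = (1+√5)/2, and any constant c > √5, there are only finitely many pairs of integers (p, q) with q ≥ 1 satisfying |φ - p/q| < 1/(c·q²). -/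
/-!
Write `φ, ψ = (1 ± √5) / 2`. For integers `p, q` the product `(p - qφ)(p - qψ) = p² - pq - q²` is an
integer, nonzero because `φ` and `ψ` are irrational, so `|p - qφ| · |p - qψ| ≥ 1`. If
`|φ - p/q| < 1/(c q²)` then `|p - qφ| < 1/(c q)` while `|p - qψ| ≤ |p - qφ| + q√5`, and the two
bounds together give `q² c (c - √5) < 1`. For `c > √5` this bounds `q`, and then `p` is confined
to a bounded interval around `qφ`.
-/

open Real goldenRatio

lemma finite_setOf_abs_sub_div_le (ξ B ε : ℝ) :
    {pq : ℤ × ℤ | 1 ≤ pq.2 ∧ (pq.2 : ℝ) ≤ B ∧ |ξ - pq.1 / pq.2| ≤ ε}.Finite := by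
  set N : ℤ := ⌈B * (|ξ| + ε) + B⌉
  refine ((Set.finite_Icc (-N) N).prod (Set.finite_Icc 1 N)).subset ?_
  rintro ⟨p, q⟩ ⟨hq, hqB, hξ⟩
  dsimp only at hq hqB hξ
  have hq0 : (0 : ℝ) < q := by exact_mod_cast hq
  have hε : 0 ≤ ε := (abs_nonneg _).trans hξ
  have hp : |(p : ℝ)| ≤ q * (|ξ| + ε) := by
    have := abs_sub_abs_le_abs_sub ((p : ℝ) / q) ξ
    rw [abs_sub_comm, abs_div, abs_of_pos hq0] at this
    rw [← div_le_iff₀' hq0]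
    linarith
  have hpB : |(p : ℝ)| ≤ B * (|ξ| + ε) :=
    hp.trans (mul_le_mul_of_nonneg_right hqB (by positivity))
  have hN : B * (|ξ| + ε) + B ≤ N := Int.le_ceil _
  have hpN : |p| ≤ N := by
    have : ((|p| : ℤ) : ℝ) ≤ N := by push_cast; linarith
    exact_mod_cast this
  have hqN : q ≤ N := by
    have : (q : ℝ) ≤ N := by linarith [abs_nonneg (p : ℝ)]
    exact_mod_cast this
  exact ⟨abs_le.mp hpN, hq, hqN⟩

lemma one_le_abs_sub_mul_goldenRatio_mul_abs_sub_mul_goldenConj {p q : ℤ} (hq : q ≠ 0) :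
    1 ≤ |p - q * φ| * |p - q * ψ| := by
  have hq' : (q : ℝ) ≠ 0 := by exact_mod_cast hq
  have hprod : (p - q * φ) * (p - q * ψ) = ((p ^ 2 - p * q - q ^ 2 : ℤ) : ℝ) := by
    push_cast
    linear_combination
      (-(p : ℝ) * q) * goldenRatio_add_goldenConj + (q : ℝ) ^ 2 * goldenRatio_mul_goldenConj
  have sub_ne_zero_of_irrational {x : ℝ} (hx : Irrational x) : (p : ℝ) - q * x ≠ 0 :=
    fun h ↦ hx.ne_rational p q (by rw [eq_div_iff hq']; linarith)
  have hne : p ^ 2 - p * q - q ^ 2 ≠ 0 := by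
    have := mul_ne_zero (sub_ne_zero_of_irrational goldenRatio_irrational)
      (sub_ne_zero_of_irrational goldenConj_irrational)
    rw [hprod] at this
    exact_mod_cast this
  rw [← abs_mul, hprod]
  exact_mod_cast Int.one_le_abs hne

lemma sq_mul_lt_one_of_abs_goldenRatio_sub_lt {c : ℝ} (hc : √5 < c) {p q : ℤ} (hq : 1 ≤ q)
    (h : |φ - p / q| < 1 / (c * q ^ 2)) : (q : ℝ) ^ 2 * (c * (c - √5)) < 1 := by
  have hc0 : 0 < c := (sqrt_nonneg 5).trans_lt hc
  have hq0 : (0 : ℝ) < q := by exact_mod_cast hq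
  set δ := |p - q * φ|
  have hδcq : δ * (c * q) < 1 :=
    calc δ * (c * q) = |q * (φ - p / q)| * (c * q) := by
          rw [mul_sub, mul_div_cancel₀ _ hq0.ne', abs_sub_comm]
      _ = |φ - p / q| * (c * q ^ 2) := by rw [abs_mul, abs_of_pos hq0]; ring
      _ < 1 := (lt_div_iff₀ (by positivity)).mp h
  have hψ : |p - q * ψ| ≤ δ + q * √5 := by
    calc |p - q * ψ| = |(p - q * φ) + q * √5| := by
          rw [← goldenRatio_sub_goldenConj]; ring_nf
      _ ≤ δ + |q * √5| := abs_add_le _ _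
      _ = δ + q * √5 := by rw [abs_of_nonneg (by positivity)]
  have hbound : 1 ≤ δ * (δ + q * √5) :=
    (one_le_abs_sub_mul_goldenRatio_mul_abs_sub_mul_goldenConj (by omega)).trans
      (mul_le_mul_of_nonneg_left hψ (abs_nonneg _))
  set x := δ * (c * q)
  set K := c * q ^ 2 * √5
  have hcq : (c * q) ^ 2 ≤ x ^ 2 + x * K :=
    calc (c * q) ^ 2 = (c * q) ^ 2 * 1 := (mul_one _).symm
      _ ≤ (c * q) ^ 2 * (δ * (δ + q * √5)) := by gcongr
      _ = x ^ 2 + x * K := by ring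
  have hx2 : x ^ 2 < 1 := pow_lt_one₀ (by positivity) hδcq two_ne_zero
  have hxK : x * K ≤ K := mul_le_of_le_one_left (by positivity) hδcq.le
  have hexpand : (q : ℝ) ^ 2 * (c * (c - √5)) = (c * q) ^ 2 - K := by ring
  linarith

theorem stmt_6 (c : ℝ) (hc : Real.sqrt 5 < c) :
    {pq : ℤ × ℤ | 1 ≤ pq.2 ∧
      |(1 + Real.sqrt 5) / 2 - (pq.1 : ℝ) / (pq.2 : ℝ)| < 1 / (c * (pq.2 : ℝ) ^ 2)}.Finite := by
  have hc0 : 0 < c := (sqrt_nonneg 5).trans_lt hc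
  refine (finite_setOf_abs_sub_div_le φ (1 / (c * (c - √5))) (1 / c)).subset ?_
  rintro ⟨p, q⟩ ⟨hq, h⟩
  dsimp only at hq h
  have hq1 : (1 : ℝ) ≤ q := by exact_mod_cast hq
  refine ⟨hq, ?_, h.le.trans ?_⟩
  · have hcc : 0 < c * (c - √5) := mul_pos hc0 (sub_pos.mpr hc)
    rw [le_div_iff₀ hcc]
    calc (q : ℝ) * (c * (c - √5)) ≤ q ^ 2 * (c * (c - √5)) :=
          mul_le_mul_of_nonneg_right (le_self_pow₀ hq1 two_ne_zero) hcc.le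
      _ ≤ 1 := (sq_mul_lt_one_of_abs_goldenRatio_sub_lt hc hq h).le
  · exact one_div_le_one_div_of_le hc0 (le_mul_of_one_le_right hc0.le (one_le_pow₀ hq1))
end

section
/- Define k(α) = limsup_{q→∞} (inf_p |q(qα - p)|)^{-1} for irrational α. Then k(α) ≥ √5 for every irrational α. -/
/-!
Let `pₙ / qₙ` be the convergents of `α` and `ξₙ` its complete quotients. Then
`qₙ |qₙ α - pₙ| = 1 / (ξₙ₊₁ + qₙ₋₁ / qₙ)`. If `ξₙ₊₁ + qₙ₋₁ / qₙ ≤ √5` for two consecutive `n`, then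
`qₙ / qₙ₊₁ > φ⁻¹` (equality is excluded since `φ` is irrational), and for three consecutive `n`
this contradicts `qₙ₊₂ ≥ qₙ₊₁ + qₙ`. So infinitely many convergents satisfy
`q |q α - p| < 1 / √5`.
-/

open Filter

noncomputable def lagrangeValue (α : ℝ) : ENNReal :=
  Filter.limsup
    (fun q : ℕ => ENNReal.ofReal ((⨅ p : ℤ, |(q : ℝ) * ((q : ℝ) * α - (p : ℝ))|)⁻¹))
    Filter.atTop

open Real
open scoped goldenRatio

theorem iInf_abs_mul_sub_pos {α : ℝ} (hα : Irrational α) {q : ℕ} (hq : 0 < q) :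
    0 < ⨅ p : ℤ, |(q : ℝ) * ((q : ℝ) * α - p)| := by
  have hq' : (0 : ℝ) < q := mod_cast hq
  have hround : 0 < |(q : ℝ) * α - round ((q : ℝ) * α)| :=
    abs_pos.2 (sub_ne_zero.2 ((hα.natCast_mul hq.ne').ne_int _))
  refine (mul_pos hq' hround).trans_le (le_ciInf fun p => ?_)
  rw [abs_mul, abs_of_pos hq']
  exact mul_le_mul_of_nonneg_left (round_le _ p) hq'.le

theorem ofReal_le_lagrangeValue {α c : ℝ} (hα : Irrational α) (hc : 0 < c)
    (h : ∃ᶠ q : ℕ in atTop, ∃ p : ℤ, |(q : ℝ) * ((q : ℝ) * α - p)| ≤ c⁻¹) :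
    ENNReal.ofReal c ≤ lagrangeValue α := by
  refine le_limsup_of_frequently_le' <|
    (h.and_eventually (eventually_gt_atTop 0)).mono fun q ⟨⟨p, hp⟩, hq⟩ => ?_
  have hbdd : BddBelow (Set.range fun p : ℤ => |(q : ℝ) * ((q : ℝ) * α - p)|) :=
    ⟨0, Set.forall_mem_range.2 fun _ => abs_nonneg _⟩
  refine ENNReal.ofReal_le_ofReal ((le_inv_comm₀ hc (iInf_abs_mul_sub_pos hα hq)).2 ?_)
  exact (ciInf_le hbdd p).trans hp

theorem inv_goldenRatio_le_of_add_le {x r : ℝ} (hx : 0 < x) (hr : 0 < r)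
    (h₁ : x⁻¹ + r⁻¹ ≤ √5) (h₂ : x + r ≤ √5) : φ⁻¹ ≤ r := by
  have hsr : 0 < √5 - r := by linarith
  have hsum : (√5 - r)⁻¹ + r⁻¹ ≤ √5 := by
    linarith [inv_anti₀ hx (show x ≤ √5 - r by linarith)]
  have hquad : 1 ≤ r * (√5 - r) := by
    rw [inv_add_inv hsr.ne' hr.ne', div_le_iff₀ (by positivity)] at hsum
    nlinarith [sqrt_nonneg 5]
  rw [inv_goldenRatio, goldenConj]
  nlinarith [sq_sqrt (show (0 : ℝ) ≤ 5 by norm_num)]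

namespace ContFrac

noncomputable def completeQuot (α : ℝ) : ℕ → ℝ
  | 0 => α
  | n + 1 => (Int.fract (completeQuot α n))⁻¹

/-- `convNum α (n + 1) / convDen α (n + 1)` is the `n`-th convergent `pₙ / qₙ`; index `0` holds
`p₋₁ = 1`, `q₋₁ = 0`. -/
noncomputable def convNum (α : ℝ) : ℕ → ℤ
  | 0 => 1
  | 1 => ⌊α⌋
  | n + 2 => ⌊completeQuot α (n + 1)⌋₊ * convNum α (n + 1) + convNum α n

noncomputable def convDen (α : ℝ) : ℕ → ℕ
  | 0 => 0
  | 1 => 1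
  | n + 2 => ⌊completeQuot α (n + 1)⌋₊ * convDen α (n + 1) + convDen α n

noncomputable def convErr (α : ℝ) (n : ℕ) : ℝ := convDen α n * α - convNum α n

noncomputable def lagrangeTerm (α : ℝ) (n : ℕ) : ℝ :=
  completeQuot α (n + 1) + convDen α n / convDen α (n + 1)

variable {α : ℝ}

theorem irrational_completeQuot (hα : Irrational α) : ∀ n, Irrational (completeQuot α n)
  | 0 => hα
  | n + 1 => ((irrational_completeQuot hα n).sub_intCast _).inv

theorem fract_completeQuot_pos (hα : Irrational α) (n : ℕ) : 0 < Int.fract (completeQuot α n) :=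
  (Int.fract_nonneg _).lt_of_ne' <| Int.fract_ne_zero_iff.2
    fun ⟨m, hm⟩ => (irrational_completeQuot hα n).ne_int m hm.symm

theorem one_lt_completeQuot (hα : Irrational α) (n : ℕ) : 1 < completeQuot α (n + 1) :=
  one_lt_inv₀ (fract_completeQuot_pos hα n) |>.2 (Int.fract_lt_one _)

theorem floor_completeQuot_add_inv (n : ℕ) :
    (⌊completeQuot α (n + 1)⌋₊ : ℝ) + (completeQuot α (n + 2))⁻¹ = completeQuot α (n + 1) := by
  have h : 0 ≤ completeQuot α (n + 1) := inv_nonneg.2 (Int.fract_nonneg _)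
  rw [show completeQuot α (n + 2) = (Int.fract (completeQuot α (n + 1)))⁻¹ from rfl, inv_inv,
    natCast_floor_eq_intCast_floor h, Int.floor_add_fract]

theorem one_le_floor_completeQuot (hα : Irrational α) (n : ℕ) : 1 ≤ ⌊completeQuot α (n + 1)⌋₊ :=
  (Nat.one_le_floor_iff _).2 (one_lt_completeQuot hα n).le

theorem convDen_add_le (hα : Irrational α) (n : ℕ) :
    convDen α (n + 1) + convDen α n ≤ convDen α (n + 2) := by
  rw [convDen]
  gcongr
  exact Nat.le_mul_of_pos_left _ (one_le_floor_completeQuot hα n)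

theorem convDen_pos (hα : Irrational α) : ∀ n, 0 < convDen α (n + 1)
  | 0 => Nat.one_pos
  | n + 1 => (convDen_pos hα n).trans_le <| (Nat.le_add_right _ _).trans (convDen_add_le hα n)

theorem le_convDen (hα : Irrational α) : ∀ n, n ≤ convDen α (n + 1)
  | 0 => Nat.zero_le _
  | 1 => convDen_add_le hα 0
  | n + 2 => by
    have h₁ : convDen α (n + 2) + convDen α (n + 1) ≤ convDen α (n + 3) := convDen_add_le hα (n + 1)
    have h₂ : n + 1 ≤ convDen α (n + 2) := le_convDen hα (n + 1)
    have h₃ : 0 < convDen α (n + 1) := convDen_pos hα n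
    show n + 2 ≤ convDen α (n + 3)
    omega

theorem tendsto_convDen (hα : Irrational α) :
    Tendsto (fun n => convDen α (n + 1)) atTop atTop :=
  tendsto_atTop_mono (le_convDen hα) tendsto_id

theorem convErr_add_two (n : ℕ) :
    convErr α (n + 2) = ⌊completeQuot α (n + 1)⌋₊ * convErr α (n + 1) + convErr α n := by
  simp only [convErr, convNum, convDen]
  push_cast
  ring

theorem completeQuot_mul_convErr (hα : Irrational α) :
    ∀ n, completeQuot α (n + 1) * convErr α (n + 1) = -convErr α n
  | 0 => by
    have hfr := (fract_completeQuot_pos hα 0).ne'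
    simp only [completeQuot, convErr, convNum, convDen] at hfr ⊢
    rw [← Int.self_sub_floor] at hfr ⊢
    field_simp
    push_cast
    ring
  | n + 1 => by
    have ih := completeQuot_mul_convErr hα n
    have hq := floor_completeQuot_add_inv (α := α) n
    have hne : completeQuot α (n + 2) ≠ 0 := (zero_lt_one.trans (one_lt_completeQuot hα _)).ne'
    rw [convErr_add_two]
    field_simp at hq
    linear_combination (completeQuot α (n + 2)) * ih + (convErr α (n + 1)) * hq

theorem completeQuot_mul_convDen_add (hα : Irrational α) (n : ℕ) :
    completeQuot α (n + 2) * convDen α (n + 2) + convDen α (n + 1) =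
      completeQuot α (n + 2) * (completeQuot α (n + 1) * convDen α (n + 1) + convDen α n) := by
  have hne : completeQuot α (n + 2) ≠ 0 := (zero_lt_one.trans (one_lt_completeQuot hα _)).ne'
  have ha : (⌊completeQuot α (n + 1)⌋₊ : ℝ) = completeQuot α (n + 1) - (completeQuot α (n + 2))⁻¹ :=
    by linarith [floor_completeQuot_add_inv (α := α) n]
  rw [convDen]
  push_cast
  rw [ha]
  field_simp
  ring

theorem convErr_mul_eq (hα : Irrational α) : ∀ n,
    convErr α (n + 1) * (completeQuot α (n + 1) * convDen α (n + 1) + convDen α n) = (-1) ^ n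
  | 0 => by
    have h := completeQuot_mul_convErr hα 0
    simp only [convErr, convDen, convNum] at h ⊢
    push_cast at h ⊢
    linear_combination h
  | n + 1 => by
    rw [completeQuot_mul_convDen_add hα, ← mul_assoc, mul_comm (convErr α _),
      completeQuot_mul_convErr hα, neg_mul, convErr_mul_eq hα n, pow_succ]
    ring

theorem abs_convDen_mul_convErr (hα : Irrational α) (n : ℕ) :
    |(convDen α (n + 1) : ℝ) * convErr α (n + 1)| = (lagrangeTerm α n)⁻¹ := by
  have hq : (0 : ℝ) < convDen α (n + 1) := mod_cast convDen_pos hα n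
  have hD : 0 < completeQuot α (n + 1) * convDen α (n + 1) + convDen α n := by
    have := one_lt_completeQuot hα n
    positivity
  have h := congrArg abs (convErr_mul_eq hα n)
  rw [abs_mul, abs_of_pos hD, abs_neg_one_pow] at h
  rw [abs_mul, abs_of_pos hq, eq_inv_of_mul_eq_one_left h, lagrangeTerm]
  field_simp

theorem lagrangeTerm_eq (hα : Irrational α) (n : ℕ) :
    lagrangeTerm α n = (completeQuot α (n + 2))⁻¹ + convDen α (n + 2) / convDen α (n + 1) := by
  have hq : (convDen α (n + 1) : ℝ) ≠ 0 := mod_cast (convDen_pos hα n).ne'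
  rw [lagrangeTerm, ← floor_completeQuot_add_inv, convDen]
  push_cast
  field_simp
  ring

theorem inv_goldenRatio_lt_convDen_div (hα : Irrational α) (n : ℕ)
    (h₀ : lagrangeTerm α n ≤ √5) (h₁ : lagrangeTerm α (n + 1) ≤ √5) :
    φ⁻¹ < convDen α (n + 1) / convDen α (n + 2) := by
  have hx : 0 < completeQuot α (n + 2) := zero_lt_one.trans (one_lt_completeQuot hα _)
  have hr : (0 : ℝ) < convDen α (n + 1) / convDen α (n + 2) := by
    have := convDen_pos hα n
    have := convDen_pos hα (n + 1)
    positivity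
  rw [lagrangeTerm_eq hα, ← inv_div] at h₀
  refine (inv_goldenRatio_le_of_add_le hx hr h₀ h₁).lt_of_ne ?_
  simpa using goldenRatio_irrational.inv.ne_rational (convDen α (n + 1)) (convDen α (n + 2))

theorem frequently_sqrt_five_lt_lagrangeTerm (hα : Irrational α) :
    ∃ᶠ n in atTop, √5 < lagrangeTerm α n := by
  refine frequently_atTop.2 fun N => ?_
  by_contra! h
  have r₀ := inv_goldenRatio_lt_convDen_div hα N (h N le_rfl) (h (N + 1) (by omega))
  have r₁ := inv_goldenRatio_lt_convDen_div hα (N + 1) (h (N + 1) (by omega)) (h (N + 2) (by omega))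
  have hsum : (convDen α (N + 2) + convDen α (N + 1) : ℝ) ≤ convDen α (N + 3) :=
    mod_cast convDen_add_le hα (N + 1)
  have h₁ : (0 : ℝ) < convDen α (N + 2) := mod_cast convDen_pos hα (N + 1)
  have h₂ : (0 : ℝ) < convDen α (N + 3) := mod_cast convDen_pos hα (N + 2)
  -- `φ⁻¹ + φ⁻² = 1` makes `qₙ₊₂ ≥ qₙ₊₁ + qₙ` incompatible with two ratios above `φ⁻¹`.
  rw [lt_div_iff₀ h₁] at r₀
  rw [lt_div_iff₀ h₂] at r₁
  have hg : φ⁻¹ * φ⁻¹ + φ⁻¹ = 1 := by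
    rw [inv_goldenRatio]
    linear_combination goldenConj_sq
  have hg₀ : 0 < φ⁻¹ := inv_pos.2 goldenRatio_pos
  nlinarith [mul_le_mul_of_nonneg_left hsum hg₀.le, mul_lt_mul_of_pos_left r₀ hg₀]

end ContFrac

theorem stmt_7 (α : ℝ) (hα : Irrational α) :
    ENNReal.ofReal (Real.sqrt 5) ≤ lagrangeValue α := by
  refine ofReal_le_lagrangeValue hα (by positivity) ((ContFrac.tendsto_convDen hα).frequently ?_)
  refine (ContFrac.frequently_sqrt_five_lt_lagrangeTerm hα).mono fun n hn => ?_
  exact ⟨ContFrac.convNum α (n + 1),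
    (ContFrac.abs_convDen_mul_convErr hα n).trans_le (inv_anti₀ (by positivity) hn.le)⟩
end
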